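/- arXiv:0910.3261 — 2 statements merged into one kernel-verified Lean document; each statement's English description precedes it below -/
import Mathlib

section
/- Let k be a field of characteristic not equal to 2, (A,·) an associative k-algebra, (R,∘,ℓ,r) an A-bimodule k-algebra, δ₊, δ₋ : R → A linear maps, and λ ∈ k. Set α = (δ₊+δ₋)/2 and β = (δ₊−δ₋)/2, and suppose β satisfies ℓ(β(u))v = u r(β(v)), λ ℓ(β(u∘v))w = λ u r(β(v∘w)), β(ℓ(x)u) = x·β(u), and β(u r(x)) = β(u)·x for all x ∈ A, u, v, w ∈ R. Define products ∘₊ and ∘₋ on R by u ∘₊ v = λ u∘v − 2ℓ(β(u))v and u ∘₋ v = λ u∘v + 2ℓ(β(u))v. Then: (a) (R,∘₊,ℓ,r) and (R,∘₋,ℓ,r) are A-bimodule k-algebras; (b) for either choice of sign ε ∈ {+,−}, the identity α(u)·α(v) − α(ℓ(α(u))v + u r(α(v)) + λ u∘v) = −β(u)·β(v) ± λ β(u∘v) holds for all u, v ∈ R (with + λ for ε = + and − λ for ε = −) if and only if δ_ε = α ε β satisfies δ_ε(u)·δ_ε(v) = δ_ε(ℓ(δ_ε(u))v + u r(δ_ε(v))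 + u ∘_ε v) for all u, v ∈ R, i.e. δ_ε is an O-operator of weight 1 associated to (R,∘_ε,ℓ,r). -/
/-!
Write `u ∘_c v = λ u∘v + c ℓ(β u)v`, so that `∘₊ = ∘_{-2}` and `∘₋ = ∘_2`; every claim of (a)
holds for all `c`. In `(u ∘_c v) ∘_c w - u ∘_c (v ∘_c w)` the terms of order `λc` cancel because
balancedness gives `λ ℓ(β(u∘v))w = λ (ℓ(βu)v)∘w = λ u∘(ℓ(βv)w)`, and those of order `c²` because
`β(ℓ(βu)v) = β(u)·β(v)`.

For (b) let `δ = α + sβ`. Balancedness makes the twist `-2s ℓ(βu)v` cancel the `β`-part of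
`ℓ(δu)v + v r(δv)`, and `β` being a bimodule map absorbs the cross terms of `δ(u)·δ(v)`, leaving
`δ(u)·δ(v) - δ(ℓ(δu)v + v r(δv) + u ∘_{-2s} v) = [α(u)·α(v) - α(ℓ(αu)v + v r(αv) + λ u∘v)]
+ s² β(u)·β(v) - sλ β(u∘v)`; take `s = ±1`.
-/

section TwistedMul

variable {k A R : Type*} [CommSemiring k] [NonUnitalRing A] [Module k A]
  [NonUnitalRing R] [Module k R]
  (ℓ r : A →ₗ[k] R →ₗ[k] R) (β : R →ₗ[k] A) (lam c : k)

def twistedMul (u v : R) : R := lam • (u * v) + c • ℓ (β u) v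

variable {ℓ r β lam c}

theorem twistedMul_left (hℓ_mul : ∀ (x y : A) (v : R), ℓ (x * y) v = ℓ x (ℓ y v))
    (hℓ_mul_left : ∀ (x : A) (v w : R), ℓ x (v * w) = ℓ x v * w)
    (hβ_left : ∀ (x : A) (u : R), β (ℓ x u) = x * β u) (x : A) (v w : R) :
    ℓ x (twistedMul ℓ β lam c v w) = twistedMul ℓ β lam c (ℓ x v) w := by
  simp only [twistedMul, map_add, map_smul, hℓ_mul_left, hβ_left, hℓ_mul]

theorem twistedMul_right (hℓ_r : ∀ (x y : A) (v : R), r y (ℓ x v) = ℓ x (r y v))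
    (hr_mul_right : ∀ (x : A) (v w : R), r x (v * w) = v * r x w) (x : A) (v w : R) :
    r x (twistedMul ℓ β lam c v w) = twistedMul ℓ β lam c v (r x w) := by
  simp only [twistedMul, map_add, map_smul, hr_mul_right, hℓ_r]

theorem twistedMul_middle (hℓ_mul : ∀ (x y : A) (v : R), ℓ (x * y) v = ℓ x (ℓ y v))
    (hr_mul_ℓ : ∀ (x : A) (v w : R), r x v * w = v * ℓ x w)
    (hβ_right : ∀ (x : A) (u : R), β (r x u) = β u * x) (x : A) (v w : R) :
    twistedMul ℓ β lam c (r x v) w = twistedMul ℓ β lam c v (ℓ x w) := by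
  simp only [twistedMul, hr_mul_ℓ, hβ_right, hℓ_mul]

variable [SMulCommClass k R R] [IsScalarTower k R R]

theorem twistedMul_assoc (hℓ_mul : ∀ (x y : A) (v : R), ℓ (x * y) v = ℓ x (ℓ y v))
    (hℓ_mul_left : ∀ (x : A) (v w : R), ℓ x (v * w) = ℓ x v * w)
    (hr_mul_ℓ : ∀ (x : A) (v w : R), r x v * w = v * ℓ x w)
    (hβ_balanced : ∀ u v : R, ℓ (β u) v = r (β v) u)
    (hβ_balanced_mul : ∀ u v w : R, lam • ℓ (β (u * v)) w = lam • r (β (v * w)) u)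
    (hβ_left : ∀ (x : A) (u : R), β (ℓ x u) = x * β u) (u v w : R) :
    twistedMul ℓ β lam c (twistedMul ℓ β lam c u v) w =
      twistedMul ℓ β lam c u (twistedMul ℓ β lam c v w) := by
  have hcross : lam • ℓ (β (u * v)) w = lam • (u * ℓ (β v) w) := by
    rw [hβ_balanced_mul, ← hβ_balanced, hℓ_mul_left, hβ_balanced, hr_mul_ℓ]
  simp only [twistedMul, map_add, map_smul, LinearMap.add_apply, LinearMap.smul_apply, add_mul,
    mul_add, smul_mul_assoc, mul_smul_comm, smul_add, hβ_left, hℓ_mul, hℓ_mul_left, mul_assoc]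
  rw [hcross, smul_comm c lam (u * _), smul_comm c lam (ℓ (β u) v * w)]
  abel

end TwistedMul

section OOperator

variable {k A R : Type*} [CommRing k]
  [NonUnitalRing A] [Module k A] [SMulCommClass k A A] [IsScalarTower k A A]
  [NonUnitalRing R] [Module k R] {ℓ r : A →ₗ[k] R →ₗ[k] R} {α β δ : R →ₗ[k] A} {lam s : k}

theorem add_smul_oOperator_defect (hβ_balanced : ∀ u v : R, ℓ (β u) v = r (β v) u)
    (hβ_left : ∀ (x : A) (u : R), β (ℓ x u) = x * β u)
    (hβ_right : ∀ (x : A) (u : R), β (r x u) = β u * x) (hδ : δ = α + s • β) (u v : R) :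
    δ u * δ v - δ (ℓ (δ u) v + r (δ v) u + twistedMul ℓ β lam (-2 * s) u v) =
      α u * α v - α (ℓ (α u) v + r (α v) u + lam • (u * v)) -
        (-((s * s) • (β u * β v)) + (s * lam) • β (u * v)) := by
  subst hδ
  have hargs : ℓ ((α + s • β) u) v + r ((α + s • β) v) u + twistedMul ℓ β lam (-2 * s) u v =
      ℓ (α u) v + r (α v) u + lam • (u * v) := by
    simp only [twistedMul, LinearMap.add_apply, LinearMap.smul_apply, map_add, map_smul,
      hβ_balanced]
    module
  rw [hargs]
  simp only [LinearMap.add_apply, LinearMap.smul_apply, map_add, map_smul, hβ_left, hβ_right,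
    add_mul, mul_add, smul_mul_assoc, mul_smul_comm]
  module

theorem isOOperator_add_smul_iff (hβ_balanced : ∀ u v : R, ℓ (β u) v = r (β v) u)
    (hβ_left : ∀ (x : A) (u : R), β (ℓ x u) = x * β u)
    (hβ_right : ∀ (x : A) (u : R), β (r x u) = β u * x) (hs : s * s = 1) (hδ : δ = α + s • β) :
    (∀ u v : R, α u * α v - α (ℓ (α u) v + r (α v) u + lam • (u * v)) =
        -(β u * β v) + (s * lam) • β (u * v)) ↔
      ∀ u v : R, δ u * δ v = δ (ℓ (δ u) v + r (δ v) u + twistedMul ℓ β lam (-2 * s) u v) := by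
  refine forall₂_congr fun u v => ?_
  rw [← sub_eq_zero (a := δ u * δ v), add_smul_oOperator_defect hβ_balanced hβ_left hβ_right hδ,
    hs, one_smul, sub_eq_zero]

end OOperator

theorem stmt6_general {k A R : Type} [Field k] (hchar : (2 : k) ≠ 0)
    [NonUnitalRing A] [Module k A] [SMulCommClass k A A] [IsScalarTower k A A]
    [NonUnitalRing R] [Module k R] [SMulCommClass k R R] [IsScalarTower k R R]
    (ℓ r : A →ₗ[k] R →ₗ[k] R)
    (hbim1 : ∀ (x y : A) (v : R), ℓ (x * y) v = ℓ x (ℓ y v))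
    (hbim3 : ∀ (x y : A) (v : R), r y (ℓ x v) = ℓ x (r y v))
    (halg1 : ∀ (x : A) (v w : R), ℓ x (v * w) = (ℓ x v) * w)
    (halg2 : ∀ (x : A) (v w : R), r x (v * w) = v * (r x w))
    (halg3 : ∀ (x : A) (v w : R), (r x v) * w = v * (ℓ x w))
    (δp δm : R →ₗ[k] A) (lam : k) :
    let α : R → A := fun u => (2 : k)⁻¹ • (δp u + δm u)
    let β : R → A := fun u => (2 : k)⁻¹ • (δp u - δm u)
    -- β is balanced of mass (κ, μ) = (−1, ±λ) …
    (∀ u v : R, ℓ (β u) v = r (β v) u) →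
    (∀ u v w : R, lam • ℓ (β (u * v)) w = lam • r (β (v * w)) u) →
    -- … and an A-bimodule homomorphism
    (∀ (x : A) (u : R), β (ℓ x u) = x * β u) →
    (∀ (x : A) (u : R), β (r x u) = β u * x) →
    let cp : R → R → R := fun u v => lam • (u * v) - (2 : k) • ℓ (β u) v
    let cm : R → R → R := fun u v => lam • (u * v) + (2 : k) • ℓ (β u) v
    -- (a) (R, ∘₊, ℓ, r) and (R, ∘₋, ℓ, r) are A-bimodule k-algebras
    ((∀ u v w : R, cp (cp u v) w = cp u (cp v w)) ∧
     (∀ (x : A) (v w : R), ℓ x (cp v w) = cp (ℓ x v) w) ∧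
     (∀ (x : A) (v w : R), r x (cp v w) = cp v (r x w)) ∧
     (∀ (x : A) (v w : R), cp (r x v) w = cp v (ℓ x w)) ∧
     (∀ u v w : R, cm (cm u v) w = cm u (cm v w)) ∧
     (∀ (x : A) (v w : R), ℓ x (cm v w) = cm (ℓ x v) w) ∧
     (∀ (x : A) (v w : R), r x (cm v w) = cm v (r x w)) ∧
     (∀ (x : A) (v w : R), cm (r x v) w = cm v (ℓ x w))) ∧
    -- (b) the two equivalences, for the signs + and −
    ((∀ u v : R,
        α u * α v - α (ℓ (α u) v + r (α v) u + lam • (u * v)) =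
          -(β u * β v) + lam • β (u * v)) ↔
      (∀ u v : R, δp u * δp v = δp (ℓ (δp u) v + r (δp v) u + cp u v))) ∧
    ((∀ u v : R,
        α u * α v - α (ℓ (α u) v + r (α v) u + lam • (u * v)) =
          -(β u * β v) - lam • β (u * v)) ↔
      (∀ u v : R, δm u * δm v = δm (ℓ (δm u) v + r (δm v) u + cm u v))) := by
  intro α β hβ_balanced hβ_balanced_mul hβ_left hβ_right cp cm
  let α' : R →ₗ[k] A := (2 : k)⁻¹ • (δp + δm)
  let β' : R →ₗ[k] A := (2 : k)⁻¹ • (δp - δm)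
  have hcp : cp = twistedMul ℓ β' lam (-2) := by
    funext u v
    simp only [cp, twistedMul, neg_smul, sub_eq_add_neg]
    rfl
  have hcm : cm = twistedMul ℓ β' lam 2 := rfl
  have hδp : δp = α' + (1 : k) • β' := by
    ext u
    simp only [α', β', LinearMap.add_apply, LinearMap.smul_apply, LinearMap.sub_apply]
    match_scalars <;> field_simp <;> ring
  have hδm : δm = α' + (-1 : k) • β' := by
    ext u
    simp only [α', β', LinearMap.add_apply, LinearMap.smul_apply, LinearMap.sub_apply]
    match_scalars <;> field_simp <;> ring
  rw [hcp, hcm, show α = ⇑α' from rfl, show β = ⇑β' from rfl]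
  refine ⟨⟨twistedMul_assoc hbim1 halg1 halg3 hβ_balanced hβ_balanced_mul hβ_left,
    twistedMul_left hbim1 halg1 hβ_left, twistedMul_right hbim3 halg2,
    twistedMul_middle hbim1 halg3 hβ_right,
    twistedMul_assoc hbim1 halg1 halg3 hβ_balanced hβ_balanced_mul hβ_left,
    twistedMul_left hbim1 halg1 hβ_left, twistedMul_right hbim3 halg2,
    twistedMul_middle hbim1 halg3 hβ_right⟩, ?_, ?_⟩
  · simpa only [one_mul, mul_one] using
      isOOperator_add_smul_iff (lam := lam) hβ_balanced hβ_left hβ_right (one_mul 1) hδp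
  · simpa only [neg_one_mul, neg_smul, ← sub_eq_add_neg, neg_mul_neg, mul_one] using
      isOOperator_add_smul_iff (lam := lam) hβ_balanced hβ_left hβ_right (by norm_num) hδm

/-- Theorem 2.14(ii): with `α = (δ₊+δ₋)/2`, `β = (δ₊−δ₋)/2` a balanced
`A`-bimodule homomorphism of mass `(−1, ±λ)`, the products `u ∘± v = λ u∘v ∓ 2ℓ(β(u))v`
make `R` into `A`-bimodule `k`-algebras, and `α` is an extended O-operator of weight `λ`
with modification `β` of mass `(−1, ±λ)` iff `δ± = α ± β` is an O-operator of weight 1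
associated to `(R, ∘±, ℓ, r)`. Here `ℓ x v` denotes `ℓ(x)v` and `r x v` denotes `v r(x)`. -/
theorem stmt6 {k A R : Type} [Field k] (hchar : (2 : k) ≠ 0)
    [NonUnitalRing A] [Module k A] [SMulCommClass k A A] [IsScalarTower k A A]
    [NonUnitalRing R] [Module k R] [SMulCommClass k R R] [IsScalarTower k R R]
    (ℓ r : A →ₗ[k] R →ₗ[k] R)
    (hbim1 : ∀ (x y : A) (v : R), ℓ (x * y) v = ℓ x (ℓ y v))
    (hbim2 : ∀ (x y : A) (v : R), r y (r x v) = r (x * y) v)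
    (hbim3 : ∀ (x y : A) (v : R), r y (ℓ x v) = ℓ x (r y v))
    (halg1 : ∀ (x : A) (v w : R), ℓ x (v * w) = (ℓ x v) * w)
    (halg2 : ∀ (x : A) (v w : R), r x (v * w) = v * (r x w))
    (halg3 : ∀ (x : A) (v w : R), (r x v) * w = v * (ℓ x w))
    (δp δm : R →ₗ[k] A) (lam : k) :
    let α : R → A := fun u => (2 : k)⁻¹ • (δp u + δm u)
    let β : R → A := fun u => (2 : k)⁻¹ • (δp u - δm u)
    -- β is balanced of mass (κ, μ) = (−1, ±λ) …
    (∀ u v : R, ℓ (β u) v = r (β v) u) →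
    (∀ u v w : R, lam • ℓ (β (u * v)) w = lam • r (β (v * w)) u) →
    -- … and an A-bimodule homomorphism
    (∀ (x : A) (u : R), β (ℓ x u) = x * β u) →
    (∀ (x : A) (u : R), β (r x u) = β u * x) →
    let cp : R → R → R := fun u v => lam • (u * v) - (2 : k) • ℓ (β u) v
    let cm : R → R → R := fun u v => lam • (u * v) + (2 : k) • ℓ (β u) v
    -- (a) (R, ∘₊, ℓ, r) and (R, ∘₋, ℓ, r) are A-bimodule k-algebras
    ((∀ u v w : R, cp (cp u v) w = cp u (cp v w)) ∧
     (∀ (x : A) (v w : R), ℓ x (cp v w) = cp (ℓ x v) w) ∧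
     (∀ (x : A) (v w : R), r x (cp v w) = cp v (r x w)) ∧
     (∀ (x : A) (v w : R), cp (r x v) w = cp v (ℓ x w)) ∧
     (∀ u v w : R, cm (cm u v) w = cm u (cm v w)) ∧
     (∀ (x : A) (v w : R), ℓ x (cm v w) = cm (ℓ x v) w) ∧
     (∀ (x : A) (v w : R), r x (cm v w) = cm v (r x w)) ∧
     (∀ (x : A) (v w : R), cm (r x v) w = cm v (ℓ x w))) ∧
    -- (b) the two equivalences, for the signs + and −
    ((∀ u v : R,
        α u * α v - α (ℓ (α u) v + r (α v) u + lam • (u * v)) =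
          -(β u * β v) + lam • β (u * v)) ↔
      (∀ u v : R, δp u * δp v = δp (ℓ (δp u) v + r (δp v) u + cp u v))) ∧
    ((∀ u v : R,
        α u * α v - α (ℓ (α u) v + r (α v) u + lam • (u * v)) =
          -(β u * β v) - lam • β (u * v)) ↔
      (∀ u v : R, δm u * δm v = δm (ℓ (δm u) v + r (δm v) u + cm u v))) :=
  stmt6_general hchar ℓ r hbim1 hbim3 halg1 halg2 halg3 δp δm lam
end

section
/- Let k be a field of characteristic not equal to 2 and A a finite-dimensional unital associative k-algebra equipped with a nondegenerate symmetric invariant bilinear form B (B(x·y,z) = B(x,y·z), B(x,y) = B(y,x)); let φ : A → A* be the linear isomorphism with φ(x)(y) = B(x,y). Let r ∈ A⊗A be skew-symmetric, i.e. σ(r) = −r. Then r12·r13 + r13·r23 − r23·r12 = 0 in A⊗A⊗A if and only if the linear map r̂ = F_r∘φ : A → A is a Rota-Baxter operator of weight zero, i.e. r̂(x)·r̂(y) = r̂(r̂(x)·y) + r̂(x·r̂(y)) for all x, y ∈ A. -/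
/-!
Contract the first two legs of `u ∈ A ⊗ A ⊗ A` against the functionals `B x` and `B y`. By
invariance and symmetry of `B`, the three terms of the associative Yang–Baxter expression
`r₁₂ r₁₃ + r₁₃ r₂₃ - r₂₃ r₁₂` contract to `-r̂(x r̂(y))`, `r̂(x) r̂(y)` and `r̂(r̂(x) y)`
respectively, where skew-symmetry of `r` supplies the sign of the first term. So the contraction
of the AYBE expression is the Rota–Baxter defect of `r̂` at `(x, y)`. Since `B` is nondegenerate
and `A` is finite-dimensional, the functionals `B x` exhaust `A*`, and an element of a tensor
product of free modules is determined by all its contractions.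
-/

open TensorProduct

/-- `r ↦ r₁₂ = Σ aᵢ ⊗ bᵢ ⊗ 1` in `A ⊗ (A ⊗ A)`. -/
noncomputable def e12 (k A : Type) [Field k] [Ring A] [Algebra k A] :
    A ⊗[k] A →ₗ[k] A ⊗[k] (A ⊗[k] A) :=
  TensorProduct.map LinearMap.id ((TensorProduct.mk k A A).flip 1)

/-- `r ↦ r₁₃ = Σ aᵢ ⊗ 1 ⊗ bᵢ` in `A ⊗ (A ⊗ A)`. -/
noncomputable def e13 (k A : Type) [Field k] [Ring A] [Algebra k A] :
    A ⊗[k] A →ₗ[k] A ⊗[k] (A ⊗[k] A) :=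
  TensorProduct.map LinearMap.id (TensorProduct.mk k A A 1)

/-- `r ↦ r₂₃ = Σ 1 ⊗ aᵢ ⊗ bᵢ` in `A ⊗ (A ⊗ A)`. -/
noncomputable def e23 (k A : Type) [Field k] [Ring A] [Algebra k A] :
    A ⊗[k] A →ₗ[k] A ⊗[k] (A ⊗[k] A) :=
  TensorProduct.mk k A (A ⊗[k] A) 1

/-- For `r ∈ A ⊗ A`, the induced map `F_r : A* → A`, characterized by
`b*(F_r(a*)) = (a* ⊗ b*)(r)`. -/
noncomputable def Fr {k A : Type} [Field k] [AddCommGroup A] [Module k A]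
    (r : A ⊗[k] A) (f : Module.Dual k A) : A :=
  TensorProduct.lid k A (LinearMap.rTensor A f r)

section Contraction

variable {R M N P : Type*} [CommSemiring R] [AddCommMonoid M] [Module R M]
  [AddCommMonoid N] [Module R N] [AddCommMonoid P] [Module R P]

noncomputable def contractFst : Module.Dual R M →ₗ[R] M ⊗[R] N →ₗ[R] N :=
  LinearMap.compRight R (TensorProduct.lid R N).toLinearMap ∘ₗ LinearMap.rTensorHom N

@[simp]
lemma contractFst_tmul (f : Module.Dual R M) (m : M) (n : N) :
    contractFst f (m ⊗ₜ[R] n) = f m • n := by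
  simp [contractFst]

noncomputable def contractFstTwo (f : Module.Dual R M) (g : Module.Dual R N) :
    M ⊗[R] (N ⊗[R] P) →ₗ[R] P :=
  contractFst f ∘ₗ (contractFst g).lTensor M

@[simp]
lemma contractFstTwo_tmul (f : Module.Dual R M) (g : Module.Dual R N) (m : M)
    (v : N ⊗[R] P) : contractFstTwo f g (m ⊗ₜ[R] v) = f m • contractFst g v := by
  simp [contractFstTwo]

lemma eq_zero_of_forall_contractFstTwo_eq_zero [Module.Free R M] [Module.Free R N]
    [Module.Free R P] {u : M ⊗[R] (N ⊗[R] P)} (h : ∀ f g, contractFstTwo f g u = 0) :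
    u = 0 := by
  let bM := Module.Free.chooseBasis R M
  let bN := Module.Free.chooseBasis R N
  let bP := Module.Free.chooseBasis R P
  let b := bM.tensorProduct (bN.tensorProduct bP)
  have repr_eq : ∀ (v : M ⊗[R] (N ⊗[R] P)) i j l,
      b.repr v (i, (j, l)) = bP.repr (contractFstTwo (bM.coord i) (bN.coord j) v) l := by
    intro v i j l
    induction v using TensorProduct.induction_on with
    | zero => simp
    | tmul m w =>
      induction w using TensorProduct.induction_on with
      | zero => simp
      | tmul n p => simp [b, mul_comm]
      | add w₁ w₂ h₁ h₂ => simp only [tmul_add, map_add, Finsupp.add_apply, h₁, h₂]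
    | add v₁ v₂ h₁ h₂ => simp only [map_add, Finsupp.add_apply, h₁, h₂]
  refine b.repr.map_eq_zero_iff.mp (Finsupp.ext fun ⟨i, j, l⟩ => ?_)
  simp [repr_eq, h]

end Contraction

lemma LinearMap.surjective_of_separatingLeft {K V : Type*} [Field K] [AddCommGroup V]
    [Module K V] [FiniteDimensional K V] {B : V →ₗ[K] V →ₗ[K] K} (hB : B.SeparatingLeft) :
    Function.Surjective B :=
  (LinearMap.injective_iff_surjective_of_finrank_eq_finrank Subspace.dual_finrank_eq.symm).mp
    (LinearMap.ker_eq_bot.mp (LinearMap.separatingLeft_iff_ker_eq_bot.mp hB))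

section AssociativeYangBaxter

variable {k A : Type} [Field k] [Ring A] [Algebra k A] (B : A →ₗ[k] A →ₗ[k] k)

lemma Fr_eq_contractFst (r : A ⊗[k] A) (f : Module.Dual k A) : Fr r f = contractFst f r := rfl

lemma contractFstTwo_e12_mul_e13 (hBinv : ∀ x y z : A, B (x * y) z = B x (y * z))
    (r s : A ⊗[k] A) (x y : A) :
    contractFstTwo (B x) (B y) (e12 k A r * e13 k A s) =
      Fr s (B (x * Fr (TensorProduct.comm k A A r) (B y))) := by
  simp only [Fr_eq_contractFst]
  induction r using TensorProduct.induction_on with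
  | zero => simp
  | add r₁ r₂ h₁ h₂ => simp only [map_add, add_mul, mul_add, h₁, h₂, LinearMap.add_apply]
  | tmul a b =>
    induction s using TensorProduct.induction_on with
    | zero => simp
    | add s₁ s₂ h₁ h₂ => simp only [map_add, mul_add, h₁, h₂]
    | tmul c d => simp [e12, e13, ← hBinv, smul_smul, mul_comm]

lemma contractFstTwo_e13_mul_e23 (r s : A ⊗[k] A) (x y : A) :
    contractFstTwo (B x) (B y) (e13 k A r * e23 k A s) = Fr r (B x) * Fr s (B y) := by
  simp only [Fr_eq_contractFst]
  induction r using TensorProduct.induction_on with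
  | zero => simp
  | add r₁ r₂ h₁ h₂ => simp only [map_add, add_mul, h₁, h₂]
  | tmul a b =>
    induction s using TensorProduct.induction_on with
    | zero => simp
    | add s₁ s₂ h₁ h₂ => simp only [map_add, mul_add, h₁, h₂]
    | tmul c d => simp [e13, e23, smul_comm ((B x) a)]

lemma contractFstTwo_e23_mul_e12 (hBsymm : ∀ x y : A, B x y = B y x)
    (hBinv : ∀ x y z : A, B (x * y) z = B x (y * z)) (r s : A ⊗[k] A) (x y : A) :
    contractFstTwo (B x) (B y) (e23 k A r * e12 k A s) = Fr r (B (Fr s (B x) * y)) := by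
  simp only [Fr_eq_contractFst]
  have hB : ∀ a d, B y (a * d) = B (d * y) a := fun a d => by
    rw [hBsymm (d * y), ← hBinv a d y, hBsymm]
  induction r using TensorProduct.induction_on with
  | zero => simp
  | add r₁ r₂ h₁ h₂ => simp only [map_add, add_mul, h₁, h₂]
  | tmul a b =>
    induction s using TensorProduct.induction_on with
    | zero => simp
    | add s₁ s₂ h₁ h₂ => simp only [map_add, mul_add, add_mul, h₁, h₂, LinearMap.add_apply]
    | tmul c d => simp [e23, e12, smul_smul, hB]

lemma contractFstTwo_aybe (hBsymm : ∀ x y : A, B x y = B y x)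
    (hBinv : ∀ x y z : A, B (x * y) z = B x (y * z)) {r : A ⊗[k] A}
    (hskew : TensorProduct.comm k A A r = -r) (x y : A) :
    contractFstTwo (B x) (B y)
        (e12 k A r * e13 k A r + e13 k A r * e23 k A r - e23 k A r * e12 k A r) =
      Fr r (B x) * Fr r (B y) - Fr r (B (Fr r (B x) * y)) - Fr r (B (x * Fr r (B y))) := by
  rw [map_sub, map_add, contractFstTwo_e12_mul_e13 B hBinv, contractFstTwo_e13_mul_e23,
    contractFstTwo_e23_mul_e12 B hBsymm hBinv, hskew]
  simp only [Fr_eq_contractFst, map_neg, mul_neg, LinearMap.neg_apply]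
  abel

end AssociativeYangBaxter

theorem stmt15_general {k A : Type} [Field k]
    [Ring A] [Algebra k A] [FiniteDimensional k A]
    (B : A →ₗ[k] A →ₗ[k] k)
    (hBsymm : ∀ x y : A, B x y = B y x)
    (hBnd : ∀ x : A, (∀ y : A, B x y = 0) → x = 0)
    (hBinv : ∀ x y z : A, B (x * y) z = B x (y * z))
    (r : A ⊗[k] A) (hskew : TensorProduct.comm k A A r = -r) :
    (e12 k A r * e13 k A r + e13 k A r * e23 k A r - e23 k A r * e12 k A r = 0) ↔
      (∀ x y : A,
        Fr r (B x) * Fr r (B y) =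
          Fr r (B (Fr r (B x) * y)) + Fr r (B (x * Fr r (B y)))) := by
  simp_rw [← sub_eq_zero (b := _ + _), ← sub_sub, ← contractFstTwo_aybe B hBsymm hBinv hskew]
  refine ⟨fun h x y => by rw [h, map_zero], fun h => ?_⟩
  refine eq_zero_of_forall_contractFstTwo_eq_zero fun f g => ?_
  obtain ⟨x, rfl⟩ := LinearMap.surjective_of_separatingLeft hBnd f
  obtain ⟨y, rfl⟩ := LinearMap.surjective_of_separatingLeft hBnd g
  exact h x y

/-- Corollary 3.13(ii), skew case: on a finite-dimensional algebra with
a nondegenerate symmetric invariant bilinear form `B` (with `φ(x) = B(x,·)`), a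
skew-symmetric `r ∈ A ⊗ A` is a solution of the AYBE iff `r̂ = F_r ∘ φ : A → A` is a
Rota–Baxter operator of weight zero. -/
theorem stmt15 {k A : Type} [Field k] (hchar : (2 : k) ≠ 0)
    [Ring A] [Algebra k A] [FiniteDimensional k A]
    (B : A →ₗ[k] A →ₗ[k] k)
    (hBsymm : ∀ x y : A, B x y = B y x)
    (hBnd : ∀ x : A, (∀ y : A, B x y = 0) → x = 0)
    (hBinv : ∀ x y z : A, B (x * y) z = B x (y * z))
    (r : A ⊗[k] A) (hskew : TensorProduct.comm k A A r = -r) :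
    (e12 k A r * e13 k A r + e13 k A r * e23 k A r - e23 k A r * e12 k A r = 0) ↔
      (∀ x y : A,
        Fr r (B x) * Fr r (B y) =
          Fr r (B (Fr r (B x) * y)) + Fr r (B (x * Fr r (B y)))) :=
  stmt15_general B hBsymm hBnd hBinv r hskew
end
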